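/- Let n ≥ 1, and for f : [0,1] → ℝ let B_n f(x) := ∑_{k=0}^n f(k/n)·b_{n,k}(x), where b_{n,k}(x) := C(n,k) x^k (1−x)^{n−k} is the k-th Bernstein basis polynomial. Then for all bounded functions f, g : [0,1] → ℝ and all x ∈ [0,1], |B_n(f·g)(x) − B_n f(x)·B_n g(x)| ≤ (1/2)·(1 − ∑_{k=0}^n b_{n,k}(x)²)·osc_{B_n}(f)·osc_{B_n}(g), where osc_{B_n}(f) := max{|f(k/n) − f(l/n)| : 0 ≤ k < l ≤ n} and similarly for g. -/

import Mathlib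

/-!
Since the weights `b_{n,k}(x)` sum to `1`, the Korkine identity
`B_n(fg) - B_n f · B_n g = ½ ∑_{k,l} b_{n,k} b_{n,l} (f(k/n) - f(l/n)) (g(k/n) - g(l/n))`
holds. The diagonal terms vanish; as the weights are nonnegative for `x ∈ [0,1]`, each
off-diagonal term is at most `b_{n,k} b_{n,l} osc(f) osc(g)` in absolute value, and
`∑_{k ≠ l} b_{n,k} b_{n,l} = 1 - ∑_k b_{n,k}²`.
-/

/-- The Bernstein basis polynomial `b_{n,k}(x) = C(n,k) x^k (1-x)^(n-k)`. -/
noncomputable def bernsteinBasis (n k : ℕ) (x : ℝ) : ℝ :=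
  (n.choose k : ℝ) * x ^ k * (1 - x) ^ (n - k)

/-- The classical `n`-th Bernstein operator. -/
noncomputable def bernsteinOp (n : ℕ) (f : ℝ → ℝ) (x : ℝ) : ℝ :=
  ∑ k ∈ Finset.range (n + 1), f (k / n) * bernsteinBasis n k x

section WeightedGruss

variable {ι : Type*} (s : Finset ι) (b F G : ι → ℝ)

theorem sum_sum_mul_mul_sub_mul_sub :
    ∑ k ∈ s, ∑ l ∈ s, b k * b l * ((F k - F l) * (G k - G l)) =
      2 * ((∑ k ∈ s, b k) * ∑ k ∈ s, F k * G k * b k -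
        (∑ k ∈ s, F k * b k) * ∑ k ∈ s, G k * b k) := by
  have expand : ∀ k l, b k * b l * ((F k - F l) * (G k - G l)) =
      F k * G k * b k * b l + b k * (F l * G l * b l) -
        (F k * b k * (G l * b l) + G k * b k * (F l * b l)) := fun k l => by ring
  simp only [expand, Finset.sum_sub_distrib, Finset.sum_add_distrib, ← Finset.mul_sum,
    ← Finset.sum_mul]
  ring

variable {s b F G}

theorem abs_weighted_cov_le {Mf Mg : ℝ}
    (hb : ∀ k ∈ s, 0 ≤ b k) (hb1 : ∑ k ∈ s, b k = 1)
    (hF : ∀ k ∈ s, ∀ l ∈ s, k ≠ l → |F k - F l| ≤ Mf)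
    (hG : ∀ k ∈ s, ∀ l ∈ s, k ≠ l → |G k - G l| ≤ Mg) :
    |∑ k ∈ s, F k * G k * b k - (∑ k ∈ s, F k * b k) * ∑ k ∈ s, G k * b k| ≤
      1 / 2 * (1 - ∑ k ∈ s, b k ^ 2) * Mf * Mg := by
  classical
  have term_le : ∀ k ∈ s, ∀ l ∈ s, |b k * b l * ((F k - F l) * (G k - G l))| ≤
      b k * b l * (Mf * Mg) - if k = l then b k ^ 2 * (Mf * Mg) else 0 := by
    intro k hk l hl
    by_cases hkl : k = l
    · subst hkl; simp [sq]
    · rw [if_neg hkl, sub_zero, abs_mul, abs_of_nonneg (mul_nonneg (hb k hk) (hb l hl)), abs_mul]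
      have hFkl := hF k hk l hl hkl
      exact mul_le_mul_of_nonneg_left
        (mul_le_mul hFkl (hG k hk l hl hkl) (abs_nonneg _) ((abs_nonneg _).trans hFkl))
        (mul_nonneg (hb k hk) (hb l hl))
  have bound_sum : ∑ k ∈ s, ∑ l ∈ s,
      (b k * b l * (Mf * Mg) - if k = l then b k ^ 2 * (Mf * Mg) else 0) =
        (1 - ∑ k ∈ s, b k ^ 2) * (Mf * Mg) := by
    simp only [Finset.sum_sub_distrib, Finset.sum_ite_eq, Finset.sum_ite_mem, Finset.inter_self,
      ← Finset.sum_mul, ← Finset.mul_sum, hb1]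
    ring
  have h := sum_sum_mul_mul_sub_mul_sub s b F G
  rw [hb1, one_mul] at h
  calc _ = 1 / 2 * |∑ k ∈ s, ∑ l ∈ s, b k * b l * ((F k - F l) * (G k - G l))| := by
        rw [h, abs_mul, abs_two]; ring
    _ ≤ 1 / 2 * ∑ k ∈ s, ∑ l ∈ s,
          (b k * b l * (Mf * Mg) - if k = l then b k ^ 2 * (Mf * Mg) else 0) := by
        gcongr
        refine (Finset.abs_sum_le_sum_abs _ _).trans (Finset.sum_le_sum fun k hk => ?_)
        exact (Finset.abs_sum_le_sum_abs _ _).trans (Finset.sum_le_sum (term_le k hk))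
    _ = 1 / 2 * (1 - ∑ k ∈ s, b k ^ 2) * Mf * Mg := by rw [bound_sum]; ring

end WeightedGruss

theorem bernsteinBasis_nonneg (n k : ℕ) {x : ℝ} (hx : x ∈ Set.Icc (0 : ℝ) 1) :
    0 ≤ bernsteinBasis n k x :=
  mul_nonneg (mul_nonneg (Nat.cast_nonneg _) (pow_nonneg hx.1 k))
    (pow_nonneg (sub_nonneg.2 hx.2) _)

theorem sum_bernsteinBasis (n : ℕ) (x : ℝ) :
    ∑ k ∈ Finset.range (n + 1), bernsteinBasis n k x = 1 := by
  have h := (add_pow x (1 - x) n).symm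
  rw [add_sub_cancel, one_pow] at h
  rw [← h]
  exact Finset.sum_congr rfl fun k _ => by unfold bernsteinBasis; ring

noncomputable def bernsteinOsc (n : ℕ) (f : ℝ → ℝ) : ℝ :=
  sSup {d : ℝ | ∃ k l : ℕ, k < l ∧ l ≤ n ∧ d = |f (k / n) - f (l / n)|}

theorem bernsteinOsc_nonneg (n : ℕ) (f : ℝ → ℝ) : 0 ≤ bernsteinOsc n f :=
  Real.sSup_nonneg fun _ ⟨_, _, _, _, hd⟩ => hd ▸ abs_nonneg _

theorem abs_sub_le_bernsteinOsc (n : ℕ) (f : ℝ → ℝ) {k l : ℕ} (hk : k ≤ n) (hl : l ≤ n) :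
    |f (k / n) - f (l / n)| ≤ bernsteinOsc n f := by
  have hbdd : BddAbove {d : ℝ | ∃ k l : ℕ, k < l ∧ l ≤ n ∧ d = |f (k / n) - f (l / n)|} := by
    refine (((Set.finite_Iic n).prod (Set.finite_Iic n)).image
      fun p : ℕ × ℕ => |f (p.1 / n) - f (p.2 / n)|).subset ?_ |>.bddAbove
    rintro _ ⟨k, l, hkl, hl, rfl⟩
    exact ⟨(k, l), ⟨hkl.le.trans hl, hl⟩, rfl⟩
  rcases lt_trichotomy k l with hkl | rfl | hlk
  · exact le_csSup hbdd ⟨k, l, hkl, hl, rfl⟩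
  · simpa using bernsteinOsc_nonneg n f
  · rw [abs_sub_comm]
    exact le_csSup hbdd ⟨l, k, hlk, hk, rfl⟩

theorem bernstein_chebyshev_gruss (n : ℕ)
    (f g : ℝ → ℝ)
    (x : ℝ) (hx : x ∈ Set.Icc (0:ℝ) 1) :
    |bernsteinOp n (fun t => f t * g t) x - bernsteinOp n f x * bernsteinOp n g x| ≤
      (1 / 2) * (1 - ∑ k ∈ Finset.range (n + 1), (bernsteinBasis n k x) ^ 2) *
        sSup {d : ℝ | ∃ k l : ℕ, k < l ∧ l ≤ n ∧ d = |f (k / n) - f (l / n)|} *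
        sSup {d : ℝ | ∃ k l : ℕ, k < l ∧ l ≤ n ∧ d = |g (k / n) - g (l / n)|} := by
  have osc_le (h : ℝ → ℝ) : ∀ k ∈ Finset.range (n + 1), ∀ l ∈ Finset.range (n + 1), k ≠ l →
      |h (k / n) - h (l / n)| ≤ bernsteinOsc n h := fun k hk l hl _ =>
    abs_sub_le_bernsteinOsc n h (Finset.mem_range_succ_iff.1 hk) (Finset.mem_range_succ_iff.1 hl)
  simpa only [bernsteinOp, bernsteinOsc, mul_assoc] using
    abs_weighted_cov_le (fun k _ => bernsteinBasis_nonneg n k hx)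
      (sum_bernsteinBasis n x) (osc_le f) (osc_le g)
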